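/- Let X be a Banach space and Y a closed subspace such that (B_Y, CB(X)) has the restricted center property. If the restricted Chebyshev-center map cent_{B_Y}(·) is Hausdorff metric continuous on CB(X), then cent_Y(·) is Hausdorff metric continuous on CB(X). -/

import Mathlib

/-!
If `l > sup_{b ∈ B} ‖b‖ + rad_Y(B)`, every restricted center of `B` in `Y` has norm at most `l`,
so `cent_Y(B) = cent_{l B_Y}(B) = l • cent_{B_Y}(l⁻¹ • B)`. Both `sup ‖b‖` and `rad_Y` move by
at most `d_H(B, A)` when `B` is replaced by `A`, so a single `l` works for all `A` near `B`; as
scaling by `l` multiplies Hausdorff distances by `l`, continuity of `cent_{B_Y}` at `l⁻¹ • B`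
yields continuity of `cent_Y` at `B`.
-/

open Metric Set Bornology Pointwise

/-- The farthest distance `r(v,B) = sup_{b ∈ B} ‖v - b‖`. -/
noncomputable def farr {X : Type*} [NormedAddCommGroup X] (v : X) (B : Set X) : ℝ :=
  ⨆ b : B, ‖v - (b : X)‖

/-- The restricted Chebyshev radius `rad_V(B) = inf_{v ∈ V} r(v,B)`. -/
noncomputable def rad {X : Type*} [NormedAddCommGroup X] (V B : Set X) : ℝ :=
  ⨅ v : V, farr (v : X) B

/-- The set of restricted Chebyshev centers of `B` in `V`. -/
noncomputable def cheb {X : Type*} [NormedAddCommGroup X] (V B : Set X) : Set X :=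
  {v ∈ V | farr v B = rad V B}
/-- Hausdorff metric continuity of the restricted Chebyshev-center map of `V` on the class
of nonempty closed bounded subsets. -/
noncomputable def hausdorffCont {X : Type*} [NormedAddCommGroup X] (V : Set X) : Prop :=
  ∀ B : Set X, B.Nonempty → IsClosed B → IsBounded B →
    ∀ ε > (0 : ℝ), ∃ δ > (0 : ℝ), ∀ A : Set X, A.Nonempty → IsClosed A → IsBounded A →
      hausdorffDist B A < δ → hausdorffDist (cheb V B) (cheb V A) < ε

section HausdorffSMul

variable {𝕜 E : Type*} [NormedDivisionRing 𝕜] [SeminormedAddCommGroup E]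
  [Module 𝕜 E] [NormSMulClass 𝕜 E]

theorem Metric.hausdorffEDist_smul₀ {c : 𝕜} (hc : c ≠ 0) (s t : Set E) :
    hausdorffEDist (c • s) (c • t) = ‖c‖₊ • hausdorffEDist s t := by
  have hsup (u v : Set E) :
      ⨆ x ∈ c • u, infEDist x (c • v) = ‖c‖₊ • ⨆ x ∈ u, infEDist x v := by
    rw [← image_smul, iSup_image]
    simp only [infEDist_smul₀ hc, ENNReal.smul_def, smul_eq_mul, ENNReal.mul_iSup]
  simp only [hausdorffEDist_def, hsup, ENNReal.smul_def, smul_eq_mul, mul_max]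

theorem Metric.hausdorffDist_smul₀ {c : 𝕜} (hc : c ≠ 0) (s t : Set E) :
    hausdorffDist (c • s) (c • t) = ‖c‖ * hausdorffDist s t := by
  simp_rw [hausdorffDist, hausdorffEDist_smul₀ hc, ENNReal.toReal_smul,
    NNReal.smul_def, coe_nnnorm, smul_eq_mul]

end HausdorffSMul

section Chebyshev

variable {X : Type*} [NormedAddCommGroup X]

lemma farr_nonneg (v : X) (B : Set X) : 0 ≤ farr v B :=
  Real.iSup_nonneg fun _ => norm_nonneg _

lemma bddAbove_range_norm_sub {B : Set X} (hB : IsBounded B) (v : X) :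
    BddAbove (range fun b : B => ‖v - (b : X)‖) := by
  obtain ⟨M, hM⟩ := isBounded_iff_forall_norm_le.1 hB
  refine ⟨‖v‖ + M, ?_⟩
  rintro _ ⟨b, rfl⟩
  exact (norm_sub_le _ _).trans (add_le_add_right (hM b b.2) _)

lemma norm_sub_le_farr {B : Set X} (hB : IsBounded B) (v : X) {b : X} (hb : b ∈ B) :
    ‖v - b‖ ≤ farr v B :=
  le_ciSup (bddAbove_range_norm_sub hB v) (⟨b, hb⟩ : B)

lemma farr_le {B : Set X} (hB : B.Nonempty) {v : X} {r : ℝ} (h : ∀ b ∈ B, ‖v - b‖ ≤ r) :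
    farr v B ≤ r :=
  have : Nonempty B := hB.to_subtype
  ciSup_le fun b => h b b.2

lemma rad_nonneg (V B : Set X) : 0 ≤ rad V B :=
  Real.iInf_nonneg fun _ => farr_nonneg _ _

lemma rad_le_farr {V : Set X} (B : Set X) {v : X} (hv : v ∈ V) : rad V B ≤ farr v B :=
  ciInf_le ⟨0, by rintro _ ⟨w, rfl⟩; exact farr_nonneg _ _⟩ (⟨v, hv⟩ : V)

lemma le_rad {V B : Set X} (hV : V.Nonempty) {r : ℝ} (h : ∀ v ∈ V, r ≤ farr v B) :
    r ≤ rad V B :=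
  have : Nonempty V := hV.to_subtype
  le_ciInf fun v => h v v.2

lemma rad_mono {V W B : Set X} (hW : W.Nonempty) (hWV : W ⊆ V) : rad V B ≤ rad W B :=
  le_rad hW fun _ hw => rad_le_farr B (hWV hw)

lemma norm_le_farr_add_farr_zero {B : Set X} (hB : B.Nonempty) (hBb : IsBounded B) (v : X) :
    ‖v‖ ≤ farr v B + farr 0 B := by
  obtain ⟨b, hb⟩ := hB
  calc ‖v‖ ≤ ‖v - b‖ + ‖0 - b‖ := by simpa using norm_sub_le_norm_sub_add_norm_sub v b 0
    _ ≤ farr v B + farr 0 B :=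
      add_le_add (norm_sub_le_farr hBb v hb) (norm_sub_le_farr hBb 0 hb)

lemma farr_le_farr_add_hausdorffDist {A B : Set X} (hA : A.Nonempty) (hB : B.Nonempty)
    (hAb : IsBounded A) (hBb : IsBounded B) (v : X) :
    farr v A ≤ farr v B + hausdorffDist B A := by
  have fin := hausdorffEDist_ne_top_of_nonempty_of_bounded hA hB hAb hBb
  refine farr_le hA fun a ha => ?_
  have hinf : ‖v - a‖ - farr v B ≤ infDist a B := by
    refine (le_infDist hB).2 fun b hb => ?_
    rw [dist_comm, dist_eq_norm]
    linarith [norm_sub_le_norm_sub_add_norm_sub v b a, norm_sub_le_farr hBb v hb]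
  linarith [infDist_le_hausdorffDist_of_mem ha fin, hausdorffDist_comm (s := A) (t := B)]

lemma rad_le_rad_add_hausdorffDist {V A B : Set X} (hV : V.Nonempty) (hA : A.Nonempty)
    (hB : B.Nonempty) (hAb : IsBounded A) (hBb : IsBounded B) :
    rad V A ≤ rad V B + hausdorffDist B A := by
  refine sub_le_iff_le_add.1 (le_rad hV fun v hv => ?_)
  linarith [farr_le_farr_add_hausdorffDist hA hB hAb hBb v, rad_le_farr A hv]

/-- Points of `W` that are nearly optimal for `B` already lie in `closedBall 0 l`. -/
lemma cheb_inter_closedBall {W B : Set X} (hW : (0 : X) ∈ W) (hB : B.Nonempty)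
    (hBb : IsBounded B) {l : ℝ} (hl : farr 0 B + rad W B < l) :
    cheb (W ∩ closedBall 0 l) B = cheb W B := by
  have mem_ball : ∀ v, farr v B < l - farr 0 B → v ∈ closedBall (0 : X) l := fun v hv => by
    rw [mem_closedBall, dist_zero_right]
    linarith [norm_le_farr_add_farr_zero hB hBb v]
  have h0 : (0 : X) ∈ W ∩ closedBall 0 l :=
    ⟨hW, mem_closedBall_self (by linarith [farr_nonneg (0 : X) B, rad_nonneg W B])⟩
  have hrad : rad (W ∩ closedBall 0 l) B = rad W B := by
    refine le_antisymm (le_of_forall_gt fun t ht => ?_) (rad_mono ⟨0, h0⟩ inter_subset_left)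
    have : Nonempty W := ⟨⟨0, hW⟩⟩
    obtain ⟨⟨v, hv⟩, hvt⟩ := exists_lt_of_ciInf_lt (lt_min ht (lt_sub_iff_add_lt'.2 hl))
    have hv_ball : v ∈ W ∩ closedBall 0 l :=
      ⟨hv, mem_ball v (hvt.trans_le (min_le_right _ _))⟩
    exact (rad_le_farr B hv_ball).trans_lt (hvt.trans_le (min_le_left _ _))
  ext v
  refine ⟨fun ⟨⟨hvW, _⟩, hv⟩ => ⟨hvW, hv.trans hrad⟩, fun ⟨hvW, hv⟩ => ?_⟩
  exact ⟨⟨hvW, mem_ball v (by rw [hv]; linarith)⟩, hv.trans hrad.symm⟩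

end Chebyshev

section Scaling

variable {𝕜 X : Type*} [NormedField 𝕜] [NormedAddCommGroup X] [NormedSpace 𝕜 X]

lemma farr_smul (c : 𝕜) (v : X) (B : Set X) : farr (c • v) (c • B) = ‖c‖ * farr v B := by
  rw [farr, farr, ← image_smul, ← (imageFactorization_surjective).iSup_comp,
    Real.mul_iSup_of_nonneg (norm_nonneg c)]
  simp only [imageFactorization, ← smul_sub, norm_smul]

lemma rad_smul (c : 𝕜) (V B : Set X) : rad (c • V) (c • B) = ‖c‖ * rad V B := by
  rw [rad, rad, ← image_smul, ← (imageFactorization_surjective).iInf_comp,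
    Real.mul_iInf_of_nonneg (norm_nonneg c)]
  simp only [imageFactorization, farr_smul]

lemma cheb_smul {c : 𝕜} (hc : c ≠ 0) (V B : Set X) : cheb (c • V) (c • B) = c • cheb V B := by
  ext x
  obtain ⟨v, rfl⟩ : ∃ v, c • v = x := ⟨c⁻¹ • x, smul_inv_smul₀ hc x⟩
  simp only [cheb, smul_mem_smul_set_iff₀ hc, mem_ofPred_eq, farr_smul, rad_smul,
    mul_right_inj' (norm_ne_zero_iff.2 hc)]

lemma Submodule.smul_coe_of_ne_zero (Y : Submodule 𝕜 X) {c : 𝕜} (hc : c ≠ 0) :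
    c • (Y : Set X) = Y := by
  ext x
  rw [mem_smul_set_iff_inv_smul_mem₀ hc]
  exact ⟨fun h => by simpa [hc] using Y.smul_mem c h, Y.smul_mem c⁻¹⟩

end Scaling

lemma cheb_eq_smul_cheb_unitBall {X : Type*} [NormedAddCommGroup X] [NormedSpace ℝ X]
    (Y : Submodule ℝ X) {C : Set X} (hC : C.Nonempty) (hCb : IsBounded C) {l : ℝ}
    (hl : farr 0 C + rad (Y : Set X) C < l) :
    cheb (Y : Set X) C = l • cheb ((Y : Set X) ∩ closedBall 0 1) (l⁻¹ • C) := by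
  have hl0 : 0 < l := by linarith [farr_nonneg (0 : X) C, rad_nonneg (Y : Set X) C]
  rw [← cheb_smul hl0.ne', smul_inv_smul₀ hl0.ne', smul_set_inter₀ hl0.ne',
    Y.smul_coe_of_ne_zero hl0.ne', smul_unitClosedBall_of_nonneg hl0.le,
    cheb_inter_closedBall Y.zero_mem hC hCb hl]

theorem stmt18_general {X : Type*} [NormedAddCommGroup X] [NormedSpace ℝ X]
    (Y : Subspace ℝ X)
    (h : hausdorffCont ((Y : Set X) ∩ closedBall 0 1)) :
    hausdorffCont (Y : Set X) := by
  intro B hB hBc hBb ε hε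
  set l := farr 0 B + rad (Y : Set X) B + 3
  have hl0 : 0 < l := by linarith [farr_nonneg (0 : X) B, rad_nonneg (Y : Set X) B]
  have hB_near : farr 0 B + rad (Y : Set X) B < l := by linarith
  obtain ⟨δ, hδ, hcont⟩ := h (l⁻¹ • B) hB.smul_set
    (hBc.smul_of_ne_zero (inv_ne_zero hl0.ne')) (hBb.smul₀ _) (ε / l) (div_pos hε hl0)
  refine ⟨min (l * δ) 1, by positivity, fun A hA hAc hAb hBA => ?_⟩
  have hBA_lt_one : hausdorffDist B A < 1 := hBA.trans_le (min_le_right _ _)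
  have hA_near : farr 0 A + rad (Y : Set X) A < l := by
    linarith [farr_le_farr_add_hausdorffDist hA hB hAb hBb 0,
      rad_le_rad_add_hausdorffDist ⟨0, Y.zero_mem⟩ hA hB hAb hBb]
  have hscaled : hausdorffDist (l⁻¹ • B) (l⁻¹ • A) < δ := by
    rw [hausdorffDist_smul₀ (inv_ne_zero hl0.ne'), norm_inv, Real.norm_of_nonneg hl0.le,
      inv_mul_lt_iff₀ hl0]
    exact hBA.trans_le (min_le_left _ _)
  rw [cheb_eq_smul_cheb_unitBall Y hB hBb hB_near, cheb_eq_smul_cheb_unitBall Y hA hAb hA_near,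
    hausdorffDist_smul₀ hl0.ne', Real.norm_of_nonneg hl0.le, ← lt_div_iff₀' hl0]
  exact hcont (l⁻¹ • A) hA.smul_set (hAc.smul_of_ne_zero (inv_ne_zero hl0.ne')) (hAb.smul₀ _)
    hscaled

theorem stmt18 {X : Type*} [NormedAddCommGroup X] [NormedSpace ℝ X] [CompleteSpace X]
    (Y : Subspace ℝ X) (hYc : IsClosed (Y : Set X))
    (hrcp : ∀ B : Set X, B.Nonempty → IsClosed B → IsBounded B →
      (cheb ((Y : Set X) ∩ closedBall 0 1) B).Nonempty)
    (h : hausdorffCont ((Y : Set X) ∩ closedBall 0 1)) :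
    hausdorffCont (Y : Set X) :=
  stmt18_general Y h
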